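/- (Theorem 2, Lyapunov stability, return-map form.) Under Assumption 1 and with θ̂ > 0, let v* > 0 be the unique fixed point of the half-return map P. Then the fixed point is stable for the discrete dynamics generated by P: for every ε > 0 there exists δ > 0 such that for every v > 0 with |v − v*| < δ and every n ∈ ℕ, |Pⁿ(v) − v*| < ε. -/

import Mathlib

/-- The system matrix `A = ![![0, 1], ![-k/m, -c/m]]`. -/
noncomputable def Amat (m c k : ℝ) : Matrix (Fin 2) (Fin 2) ℝ :=
  ![![0, 1], ![-k/m, -c/m]]

/-- The flow map `x ↦ exp(t A) x` (matrix exponential). -/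
noncomputable def flow (m c k : ℝ) (t : ℝ) (x : Fin 2 → ℝ) : Fin 2 → ℝ :=
  (NormedSpace.exp (t • Amat m c k)).mulVec x

/-- The total mechanical energy `E(x) = (1/2)·m·x₂² + (1/2)·k·x₁²`. -/
noncomputable def energy (m k : ℝ) (x : Fin 2 → ℝ) : ℝ :=
  (1 / 2) * m * (x 1) ^ 2 + (1 / 2) * k * (x 0) ^ 2

/-- `τ` is the first-hitting-time map of the jump set `D = {x : x₁ = 0}`:
for every `x ≠ 0`, `τ x` is the least `t > 0` with `(exp(t A) x)₁ = 0`. -/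
def IsFirstHittingTime (m c k : ℝ) (τ : (Fin 2 → ℝ) → ℝ) : Prop :=
  ∀ x : Fin 2 → ℝ, x ≠ 0 → IsLeast {t : ℝ | 0 < t ∧ flow m c k t x 0 = 0} (τ x)

/-- The half-return map `P(v) = −(exp(τ((θ̂, v)) A) · (θ̂, v))₂`. -/
noncomputable def halfReturn (m c k θ : ℝ) (τ : (Fin 2 → ℝ) → ℝ) (v : ℝ) : ℝ :=
  -(flow m c k (τ ![θ, v]) ![θ, v] 1)

/-- The dissipated energy `Diss(v) = E((θ̂, v)) − E(exp(τ((θ̂, v)) A)·(θ̂, v))`. -/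
noncomputable def diss (m c k θ : ℝ) (τ : (Fin 2 → ℝ) → ℝ) (v : ℝ) : ℝ :=
  energy m k ![θ, v] - energy m k (flow m c k (τ ![θ, v]) ![θ, v])

noncomputable def sg (m c : ℝ) : ℝ := -c / (2*m)
noncomputable def om (m c k : ℝ) : ℝ := Real.sqrt (4*k*m - c^2) / (2*m)
noncomputable def Bmat (m c k : ℝ) : Matrix (Fin 2) (Fin 2) ℝ := Amat m c k - sg m c • 1

lemma om_pos {m c k : ℝ} (hm : 0 < m) (hud : c^2 < 4*k*m) : 0 < om m c k :=
  div_pos (Real.sqrt_pos.2 (by linarith)) (by linarith)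

lemma sg_neg {m c : ℝ} (hm : 0 < m) (hc : 0 < c) : sg m c < 0 :=
  div_neg_of_neg_of_pos (by linarith) (by linarith)

lemma om_sq {m c k : ℝ} (hm : 0 < m) (hud : c^2 < 4*k*m) :
    om m c k ^ 2 = k/m - sg m c ^ 2 := by
  unfold om sg
  rw [div_pow, Real.sq_sqrt (by linarith)]
  field_simp
  ring

lemma B_sq {m c k : ℝ} (hm : 0 < m) (hud : c^2 < 4*k*m) :
    Bmat m c k * Bmat m c k = (-(om m c k ^ 2)) • 1 := by
  have h := om_sq hm hud
  have hm' : m ≠ 0 := ne_of_gt hm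
  ext i j
  simp only [Bmat, Matrix.mul_apply, Matrix.sub_apply, Matrix.smul_apply]
  fin_cases i <;> fin_cases j <;>
    simp [Bmat, Amat, Matrix.mul_apply, Fin.sum_univ_succ, Matrix.one_apply, h, sg] <;>
    field_simp <;> ring


noncomputable def Mmat (m c k : ℝ) (t : ℝ) : Matrix (Fin 2) (Fin 2) ℝ :=
  (Real.exp (sg m c * t) * Real.cos (om m c k * t)) • 1
    + (Real.exp (sg m c * t) * Real.sin (om m c k * t) / om m c k) • Bmat m c k

attribute [local instance] Matrix.linftyOpNormedAddCommGroup Matrix.linftyOpNormedRing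
  Matrix.linftyOpNormedAlgebra

lemma hasDerivAt_Mmat {m c k : ℝ} (hm : 0 < m) (hud : c^2 < 4*k*m) (t : ℝ) :
    HasDerivAt (Mmat m c k) (Amat m c k * Mmat m c k t) t := by
  set σ := sg m c
  set ω := om m c k
  have hω : ω ≠ 0 := ne_of_gt (om_pos hm hud)
  have hidσ : HasDerivAt (fun t : ℝ => σ * t) σ t := by
    simpa using (hasDerivAt_id t).const_mul σ
  have hidω : HasDerivAt (fun t : ℝ => ω * t) ω t := by
    simpa using (hasDerivAt_id t).const_mul ω
  have he : HasDerivAt (fun t => Real.exp (σ*t)) (Real.exp (σ*t) * σ) t := hidσ.exp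
  have hcos : HasDerivAt (fun t => Real.cos (ω*t)) (-Real.sin (ω*t) * ω) t := hidω.cos
  have hsin : HasDerivAt (fun t => Real.sin (ω*t)) (Real.cos (ω*t) * ω) t := hidω.sin
  have h1 := he.mul hcos
  have h2 := (he.mul hsin).div_const ω
  have hM := (h1.smul_const (1 : Matrix (Fin 2) (Fin 2) ℝ)).add (h2.smul_const (Bmat m c k))
  convert hM using 1
  iterate 4 rfl
  have hA : Amat m c k = Bmat m c k + σ • 1 := by rw [Bmat]; abel
  rw [hA, Mmat, add_mul, Matrix.smul_mul, one_mul, mul_add, Matrix.mul_smul, Matrix.mul_smul,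
    mul_one, B_sq hm hud]
  rw [smul_add]
  rw [show sg m c = σ from rfl, show om m c k = ω from rfl]
  match_scalars <;> field_simp <;> ring

lemma exp_eq_Mmat {m c k : ℝ} (hm : 0 < m) (hud : c^2 < 4*k*m) (t : ℝ) :
    NormedSpace.exp (t • Amat m c k) = Mmat m c k t := by
  set A := Amat m c k
  -- N t = exp (t • (-A)) * M t has zero derivative
  have hN : ∀ s : ℝ, HasDerivAt (fun u => NormedSpace.exp (u • (-A)) * Mmat m c k u) 0 s := by
    intro s
    have hexp : HasDerivAt (fun u : ℝ => NormedSpace.exp (u • (-A)))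
        (NormedSpace.exp (s • (-A)) * (-A)) s := hasDerivAt_exp_smul_const (-A) s
    have := hexp.mul (hasDerivAt_Mmat hm hud s)
    convert this using 1
    iterate 4 rfl
    rw [mul_assoc, Matrix.neg_mul, ← mul_add, neg_add_cancel, mul_zero]
  have hconst : (fun u => NormedSpace.exp (u • (-A)) * Mmat m c k u) t
      = (fun u => NormedSpace.exp (u • (-A)) * Mmat m c k u) 0 :=
    is_const_of_deriv_eq_zero (fun x => (hN x).differentiableAt) (fun x => (hN x).deriv) t 0
  simp only [zero_smul, NormedSpace.exp_zero, one_mul] at hconst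
  have hM0 : Mmat m c k 0 = 1 := by
    simp [Mmat]
  rw [hM0] at hconst
  -- exp (t • A) * exp (t • (-A)) = 1
  have hinv : NormedSpace.exp (t • A) * NormedSpace.exp (t • (-A)) = 1 := by
    rw [smul_neg, ← Matrix.exp_add_of_commute _ _ (Commute.refl (t • A)).neg_right,
      add_neg_cancel, NormedSpace.exp_zero]
  calc NormedSpace.exp (t • A)
      = NormedSpace.exp (t • A) * (NormedSpace.exp (t • (-A)) * Mmat m c k t) := by
        rw [hconst, mul_one]
    _ = Mmat m c k t := by rw [← mul_assoc, hinv, one_mul]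

lemma flow_apply0 {m c k : ℝ} (hm : 0 < m) (hud : c^2 < 4*k*m) (t θ v : ℝ) :
    flow m c k t ![θ, v] 0 = Real.exp (sg m c * t) *
      (θ * Real.cos (om m c k * t) + ((v - sg m c * θ)/om m c k) * Real.sin (om m c k * t)) := by
  rw [flow, exp_eq_Mmat hm hud]
  simp only [Mmat, Bmat, Matrix.mulVec, dotProduct, Fin.sum_univ_succ, Matrix.add_apply, Matrix.smul_apply, Matrix.sub_apply]
  simp [Mmat, Matrix.mulVec, dotProduct, Fin.sum_univ_succ, Bmat, Amat, Matrix.one_apply, Matrix.sub_apply, Matrix.smul_apply]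
  ring

lemma flow_apply1 {m c k : ℝ} (hm : 0 < m) (hud : c^2 < 4*k*m) (t θ v : ℝ) :
    flow m c k t ![θ, v] 1 = Real.exp (sg m c * t) *
      (v * Real.cos (om m c k * t) + ((sg m c * v - (k/m)*θ)/om m c k) * Real.sin (om m c k * t)) := by
  rw [flow, exp_eq_Mmat hm hud]
  simp only [Mmat, Bmat, Matrix.mulVec, dotProduct, Fin.sum_univ_succ, Matrix.add_apply, Matrix.smul_apply, Matrix.sub_apply]
  simp [Mmat, Matrix.mulVec, dotProduct, Fin.sum_univ_succ, Bmat, Amat, Matrix.one_apply, Matrix.sub_apply, Matrix.smul_apply]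
  have hm' : (m:ℝ) ≠ 0 := ne_of_gt hm
  have hω : om m c k ≠ 0 := (om_pos hm hud).ne'
  field_simp [sg]
  unfold sg
  field_simp
  ring

noncomputable def Tt (m c k θ v : ℝ) : ℝ :=
  (Real.pi - Real.arctan (om m c k * θ / (v - sg m c * θ))) / om m c k

noncomputable def Pf (m c k θ v : ℝ) : ℝ :=
  Real.exp (sg m c * Tt m c k θ v) *
    Real.sqrt ((v - sg m c * θ)^2 + om m c k ^2 * θ^2)

section hit
variable {m c k θ v : ℝ}

lemma s_pos (hm : 0 < m) (hc : 0 < c) (hθ : 0 < θ) (hv : 0 ≤ v) :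
    0 < v - sg m c * θ := by
  have : sg m c * θ < 0 := mul_neg_of_neg_of_pos (sg_neg hm hc) hθ
  linarith

lemma trig_combo (hm : 0 < m) (hc : 0 < c) (hk : 0 < k) (hud : c^2 < 4*k*m)
    (hθ : 0 < θ) (hv : 0 ≤ v) (u : ℝ) :
    θ * Real.cos u + ((v - sg m c * θ)/om m c k) * Real.sin u =
      ((v - sg m c * θ)/om m c k) * Real.sqrt (1 + (om m c k * θ / (v - sg m c * θ))^2) *
        Real.sin (u + Real.arctan (om m c k * θ / (v - sg m c * θ))) := by
  have hs := s_pos hm hc hθ hv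
  have hω := om_pos hm hud
  set s := v - sg m c * θ
  set q := om m c k * θ / s
  have hW : (0:ℝ) < Real.sqrt (1 + q^2) := Real.sqrt_pos.2 (by positivity)
  set α := Real.arctan q with hα
  have h1 : Real.sqrt (1+q^2) * Real.sin α = q := by
    rw [hα, Real.sin_arctan]; field_simp
  have h2 : Real.sqrt (1+q^2) * Real.cos α = 1 := by
    rw [hα, Real.cos_arctan]; field_simp
  have expand : s/om m c k * Real.sqrt (1+q^2) * Real.sin (u + α) =
      s/om m c k * (Real.sin u * (Real.sqrt (1+q^2) * Real.cos α)
        + Real.cos u * (Real.sqrt (1+q^2) * Real.sin α)) := by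
    rw [Real.sin_add]; ring
  rw [expand, h1, h2]
  have hq : s/om m c k * q = θ := by
    rw [show q = om m c k * θ / s from rfl]
    field_simp
  calc θ * Real.cos u + s / om m c k * Real.sin u
      = (s/om m c k * q) * Real.cos u + s / om m c k * Real.sin u := by rw [hq]
    _ = s / om m c k * (Real.sin u * 1 + Real.cos u * q) := by ring

lemma flow0_eq (hm : 0 < m) (hc : 0 < c) (hk : 0 < k) (hud : c^2 < 4*k*m)
    (hθ : 0 < θ) (hv : 0 ≤ v) (t : ℝ) :
    flow m c k t ![θ, v] 0 = Real.exp (sg m c * t) *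
      ((v - sg m c * θ)/om m c k * Real.sqrt (1 + (om m c k * θ / (v - sg m c * θ))^2) *
        Real.sin (om m c k * t + Real.arctan (om m c k * θ / (v - sg m c * θ)))) := by
  rw [flow_apply0 hm hud, trig_combo hm hc hk hud hθ hv]

lemma omT (hm : 0 < m) (hud : c^2 < 4*k*m) :
    om m c k * Tt m c k θ v = Real.pi - Real.arctan (om m c k * θ / (v - sg m c * θ)) := by
  have hω := (om_pos hm hud).ne'
  rw [Tt, mul_div_cancel₀ _ hω]

lemma isLeast_hit (hm : 0 < m) (hc : 0 < c) (hk : 0 < k) (hud : c^2 < 4*k*m)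
    (hθ : 0 < θ) (hv : 0 ≤ v) :
    IsLeast {t : ℝ | 0 < t ∧ flow m c k t ![θ, v] 0 = 0} (Tt m c k θ v) := by
  have hω := om_pos hm hud
  have hs := s_pos hm hc hθ hv
  set q := om m c k * θ / (v - sg m c * θ) with hqdef
  have hq : 0 < q := by positivity
  have hα1 : 0 < Real.arctan q := by simpa using Real.arctan_strictMono hq
  have hα2 : Real.arctan q < Real.pi/2 := Real.arctan_lt_pi_div_two q
  have hπ := Real.pi_pos
  have hT := omT (m := m) (c := c) (k := k) (θ := θ) (v := v) hm hud
  constructor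
  · refine ⟨div_pos (by linarith) hω, ?_⟩
    rw [flow0_eq hm hc hk hud hθ hv, hT]
    rw [sub_add_cancel, Real.sin_pi]
    ring
  · rintro t ⟨ht, hft⟩
    by_contra hlt
    push_neg at hlt
    have hu : 0 < om m c k * t := by positivity
    have hu2 : om m c k * t + Real.arctan q < Real.pi := by
      have h3 : om m c k * t < om m c k * Tt m c k θ v := by
        exact mul_lt_mul_of_pos_left hlt hω
      rw [hT] at h3; linarith
    have hsin : 0 < Real.sin (om m c k * t + Real.arctan q) :=
      Real.sin_pos_of_pos_of_lt_pi (by linarith) hu2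
    have hpos : 0 < flow m c k t ![θ, v] 0 := by
      rw [flow0_eq hm hc hk hud hθ hv]
      have hW : (0:ℝ) < Real.sqrt (1 + q^2) := Real.sqrt_pos.2 (by positivity)
      have := Real.exp_pos (sg m c * t)
      have h4 : 0 < (v - sg m c * θ)/om m c k := div_pos hs hω
      positivity
    rw [hft] at hpos
    exact lt_irrefl 0 hpos

lemma sqrtW (hm : 0 < m) (hc : 0 < c) (hud : c^2 < 4*k*m) (hθ : 0 < θ) (hv : 0 ≤ v) :
    Real.sqrt (1 + (om m c k * θ / (v - sg m c * θ))^2) =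
      Real.sqrt ((v - sg m c * θ)^2 + om m c k ^2 * θ^2) / (v - sg m c * θ) := by
  have hs := s_pos hm hc hθ hv
  have h1 : 1 + (om m c k * θ / (v - sg m c * θ))^2 =
      ((v - sg m c * θ)^2 + om m c k ^2 * θ^2) / (v - sg m c * θ)^2 := by
    rw [div_pow, eq_div_iff (by positivity), add_mul, div_mul_cancel₀ _ (by positivity)]
    ring
  rw [h1, Real.sqrt_div (by positivity), Real.sqrt_sq hs.le]

lemma halfReturn_eq (hm : 0 < m) (hc : 0 < c) (hk : 0 < k) (hud : c^2 < 4*k*m)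
    (hθ : 0 < θ) (τ : (Fin 2 → ℝ) → ℝ) (hτ : IsFirstHittingTime m c k τ) (hv : 0 ≤ v) :
    halfReturn m c k θ τ v = Pf m c k θ v := by
  have hω := om_pos hm hud
  have hs := s_pos hm hc hθ hv
  have hne : ![θ, v] ≠ 0 := by
    intro h
    have h0 := congrFun h 0
    simp at h0
    exact hθ.ne' h0
  have htau : τ ![θ, v] = Tt m c k θ v :=
    (hτ _ hne).unique (isLeast_hit hm hc hk hud hθ hv)
  have hT := omT (m := m) (c := c) (k := k) (θ := θ) (v := v) hm hud
  rw [halfReturn, htau, flow_apply1 hm hud, hT, Real.cos_pi_sub, Real.sin_pi_sub,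
    Real.cos_arctan, Real.sin_arctan, sqrtW hm hc hud hθ hv, Pf]
  have hQ : (0:ℝ) < (v - sg m c * θ)^2 + om m c k ^2 * θ^2 := by positivity
  have hsq : Real.sqrt ((v - sg m c * θ)^2 + om m c k ^2 * θ^2) ^ 2 =
      (v - sg m c * θ)^2 + om m c k ^2 * θ^2 := Real.sq_sqrt hQ.le
  have hsqpos : 0 < Real.sqrt ((v - sg m c * θ)^2 + om m c k ^2 * θ^2) := Real.sqrt_pos.2 hQ
  have hkm : k/m = om m c k ^2 + sg m c ^2 := by rw [om_sq hm hud]; ring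
  rw [hkm]
  have key : Real.sqrt ((v - sg m c * θ)^2 + om m c k ^2 * θ^2) *
      Real.sqrt ((v - sg m c * θ)^2 + om m c k ^2 * θ^2) =
      (v - sg m c * θ)^2 + om m c k ^2 * θ^2 := Real.mul_self_sqrt hQ.le
  field_simp
  rw [show θ ^ 2 * om m c k ^ 2 = om m c k ^ 2 * θ ^ 2 by ring]
  linear_combination (-1:ℝ) * hsq

lemma hasDerivAt_Pf (hm : 0 < m) (hc : 0 < c) (hk : 0 < k) (hud : c^2 < 4*k*m)
    (hθ : 0 < θ) (hv : 0 ≤ v) :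
    HasDerivAt (Pf m c k θ)
      (Real.exp (sg m c * Tt m c k θ v) * v /
        Real.sqrt ((v - sg m c * θ)^2 + om m c k ^2 * θ^2)) v := by
  have hω := om_pos hm hud
  have hs := s_pos hm hc hθ hv
  set σ := sg m c
  set ω := om m c k
  have hsne : v - σ * θ ≠ 0 := hs.ne'
  have hQ : (0:ℝ) < (v - σ * θ)^2 + ω^2 * θ^2 := by positivity
  have hS : (0:ℝ) < Real.sqrt ((v - σ * θ)^2 + ω^2 * θ^2) := Real.sqrt_pos.2 hQ
  have hs' : HasDerivAt (fun v : ℝ => v - σ * θ) 1 v := (hasDerivAt_id v).sub_const _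
  have hq' : HasDerivAt (fun v : ℝ => ω * θ / (v - σ * θ))
      ((0 * (v - σ*θ) - ω * θ * 1) / (v - σ*θ)^2) v :=
    (hasDerivAt_const v (ω*θ)).div hs' hsne
  have hα' : HasDerivAt (fun v : ℝ => Real.arctan (ω * θ / (v - σ * θ)))
      (1 / (1 + (ω * θ / (v - σ*θ))^2) * ((0 * (v - σ*θ) - ω * θ * 1) / (v - σ*θ)^2)) v :=
    (Real.hasDerivAt_arctan _).comp v hq'
  have hT' : HasDerivAt (Tt m c k θ)
      ((0 - 1 / (1 + (ω * θ / (v - σ*θ))^2) * ((0 * (v - σ*θ) - ω * θ * 1) / (v - σ*θ)^2)) / ω) v :=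
    (((hasDerivAt_const v Real.pi).sub hα').div_const ω)
  have hE : HasDerivAt (fun v => Real.exp (σ * Tt m c k θ v))
      (Real.exp (σ * Tt m c k θ v) *
        (σ * ((0 - 1 / (1 + (ω * θ / (v - σ*θ))^2) * ((0 * (v - σ*θ) - ω * θ * 1) / (v - σ*θ)^2)) / ω))) v :=
    (hT'.const_mul σ).exp
  have hQ' : HasDerivAt (fun v : ℝ => (v - σ * θ)^2 + ω^2 * θ^2)
      ((2 : ℕ) * (v - σ*θ)^1 * 1) v := (hs'.pow 2).add_const _
  have hSq : HasDerivAt (fun v : ℝ => Real.sqrt ((v - σ * θ)^2 + ω^2 * θ^2))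
      ((2 : ℕ) * (v - σ*θ)^1 * 1 / (2 * Real.sqrt ((v - σ*θ)^2 + ω^2 * θ^2))) v :=
    hQ'.sqrt hQ.ne'
  have hP := hE.mul hSq
  convert hP using 1
  iterate 3 rfl
  have key : Real.sqrt ((v - σ*θ)^2 + ω^2 * θ^2) * Real.sqrt ((v - σ*θ)^2 + ω^2 * θ^2)
      = (v - σ*θ)^2 + ω^2 * θ^2 := Real.mul_self_sqrt hQ.le
  have h1q : 1 + (ω * θ / (v - σ*θ))^2 = ((v - σ*θ)^2 + ω^2 * θ^2) / (v - σ*θ)^2 := by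
    rw [div_pow, eq_div_iff (by positivity), add_mul, div_mul_cancel₀ _ (by positivity)]
    ring
  rw [h1q]
  set E := Real.exp (σ * Tt m c k θ v)
  have hE0 : 0 < E := Real.exp_pos _
  rw [div_eq_iff hS.ne']
  generalize Real.sqrt ((v - σ*θ)^2 + ω^2 * θ^2) = S at *
  field_simp
  linear_combination (-2*σ*θ*ω) * key
lemma Pf_pos (hm : 0 < m) (hc : 0 < c) (hud : c^2 < 4*k*m) (hθ : 0 < θ) (hv : 0 ≤ v) :
    0 < Pf m c k θ v := by
  have hω := om_pos hm hud
  have hs := s_pos hm hc hθ hv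
  have hQ : (0:ℝ) < (v - sg m c * θ)^2 + om m c k ^2 * θ^2 := by positivity
  exact mul_pos (Real.exp_pos _) (Real.sqrt_pos.2 hQ)

lemma Pf_strictMonoOn (hm : 0 < m) (hc : 0 < c) (hk : 0 < k) (hud : c^2 < 4*k*m)
    (hθ : 0 < θ) : StrictMonoOn (Pf m c k θ) (Set.Ici 0) := by
  apply strictMonoOn_of_deriv_pos (convex_Ici 0)
  · exact fun x hx => (hasDerivAt_Pf hm hc hk hud hθ hx).continuousAt.continuousWithinAt
  · intro x hx
    rw [interior_Ici] at hx
    rw [(hasDerivAt_Pf hm hc hk hud hθ (le_of_lt hx)).deriv]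
    have hs := s_pos hm hc hθ hx.le
    have hQ : (0:ℝ) < (x - sg m c * θ)^2 + om m c k ^2 * θ^2 := by positivity
    exact div_pos (mul_pos (Real.exp_pos _) hx) (Real.sqrt_pos.2 hQ)

lemma Pf_le (hm : 0 < m) (hc : 0 < c) (hk : 0 < k) (hud : c^2 < 4*k*m)
    (hθ : 0 < θ) (hv : 0 ≤ v) :
    Pf m c k θ v ≤ Real.exp (sg m c * (Real.pi/2) / om m c k) *
      ((v - sg m c * θ) + om m c k * θ) := by
  have hω := om_pos hm hud
  have hσ := sg_neg hm hc
  have hs := s_pos hm hc hθ hv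
  have hα2 : Real.arctan (om m c k * θ / (v - sg m c * θ)) < Real.pi/2 :=
    Real.arctan_lt_pi_div_two _
  have hT : Real.pi/2/om m c k ≤ Tt m c k θ v := by
    rw [Tt]
    gcongr
    linarith
  have hexp : Real.exp (sg m c * Tt m c k θ v) ≤ Real.exp (sg m c * (Real.pi/2) / om m c k) := by
    apply Real.exp_le_exp.2
    rw [mul_div_assoc]
    exact mul_le_mul_of_nonpos_left hT hσ.le
  have hsqrt : Real.sqrt ((v - sg m c * θ)^2 + om m c k ^2 * θ^2) ≤
      (v - sg m c * θ) + om m c k * θ := by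
    have h1 : (v - sg m c * θ)^2 + om m c k ^2 * θ^2 ≤ ((v - sg m c * θ) + om m c k * θ)^2 := by
      nlinarith [mul_pos hs (mul_pos hω hθ)]
    calc Real.sqrt ((v - sg m c * θ)^2 + om m c k ^2 * θ^2)
        ≤ Real.sqrt (((v - sg m c * θ) + om m c k * θ)^2) := Real.sqrt_le_sqrt h1
      _ = (v - sg m c * θ) + om m c k * θ := Real.sqrt_sq (by positivity)
  exact mul_le_mul hexp hsqrt (Real.sqrt_nonneg _) (Real.exp_pos _).le
end hit

/-- Theorem 2, Lyapunov stability, return-map form: under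
Assumption 1 and `θ̂ > 0`, if `v* > 0` is the unique fixed point of `P`, then `v*`
is stable for the discrete dynamics generated by `P`: for every `ε > 0` there is
`δ > 0` such that every `v > 0` with `|v − v*| < δ` satisfies
`|Pⁿ(v) − v*| < ε` for all `n`. -/
theorem stmt16 (m c k θ : ℝ) (hm : 0 < m) (hc : 0 < c) (hk : 0 < k)
    (hud : c ^ 2 < 4 * k * m) (hθ : 0 < θ)
    (τ : (Fin 2 → ℝ) → ℝ) (hτ : IsFirstHittingTime m c k τ)
    (vstar : ℝ) (hv : 0 < vstar) (hfix : halfReturn m c k θ τ vstar = vstar)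
    (huniq : ∀ v : ℝ, 0 < v → halfReturn m c k θ τ v = v → v = vstar) :
    ∀ ε : ℝ, 0 < ε → ∃ δ : ℝ, 0 < δ ∧
      ∀ v : ℝ, 0 < v → |v - vstar| < δ →
        ∀ n : ℕ, |(halfReturn m c k θ τ)^[n] v - vstar| < ε := by
  have hud' : c^2 < 4*k*m := hud
  have hPeq : ∀ v : ℝ, 0 ≤ v → halfReturn m c k θ τ v = Pf m c k θ v :=
    fun v hv0 => halfReturn_eq hm hc hk hud' hθ τ hτ hv0
  have hfix' : Pf m c k θ vstar = vstar := by rw [← hPeq vstar hv.le]; exact hfix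
  have huniq' : ∀ v : ℝ, 0 < v → Pf m c k θ v = v → v = vstar := fun v h hh =>
    huniq v h (by rw [hPeq v h.le]; exact hh)
  have mono := Pf_strictMonoOn hm hc hk hud' hθ
  have hcont : ContinuousOn (fun v => Pf m c k θ v - v) (Set.Ici 0) := fun x hx =>
    ((hasDerivAt_Pf hm hc hk hud' hθ hx).continuousAt.sub continuous_id.continuousAt).continuousWithinAt
  -- sign fact on (0, vstar)
  have sign1 : ∀ v : ℝ, 0 < v → v < vstar → v < Pf m c k θ v := by
    intro w hw0 hwv
    by_contra hle
    push_neg at hle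
    have hne : Pf m c k θ w ≠ w := fun h => absurd (huniq' w hw0 h) (ne_of_lt hwv)
    have hlt : Pf m c k θ w < w := lt_of_le_of_ne hle hne
    -- small u with Pf u > u
    set L := Pf m c k θ 0 with hL
    have hL0 : 0 < L := Pf_pos hm hc hud' hθ le_rfl
    set u := min w L / 2 with hu
    have hu0 : 0 < u := by positivity
    have huw : u < w := by
      have : min w L ≤ w := min_le_left _ _
      linarith
    have huL : u < L := by
      have : min w L ≤ L := min_le_right _ _
      linarith
    have hfu : 0 < Pf m c k θ u - u := by
      have := mono (Set.mem_Ici.2 le_rfl) (Set.mem_Ici.2 hu0.le) hu0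
      linarith
    have hfw : Pf m c k θ w - w < 0 := by linarith
    have hsub : Set.Icc u w ⊆ Set.Ici (0:ℝ) := fun x hx => le_trans hu0.le hx.1
    have hiv := intermediate_value_Icc' huw.le (hcont.mono hsub)
    have h0mem : (0:ℝ) ∈ Set.Icc (Pf m c k θ w - w) (Pf m c k θ u - u) :=
      ⟨hfw.le, hfu.le⟩
    obtain ⟨z, hz, hz0⟩ := hiv h0mem
    have hz1 : Pf m c k θ z = z := by linarith [sub_eq_zero.1 hz0]
    have hzpos : 0 < z := lt_of_lt_of_le hu0 hz.1
    have h1 := huniq' z hzpos hz1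
    have h2 : z < vstar := lt_of_le_of_lt hz.2 hwv
    exact absurd h1 (ne_of_lt h2)
  -- sign fact on (vstar, ∞)
  have sign2 : ∀ v : ℝ, vstar < v → Pf m c k θ v < v := by
    intro w hwv
    have hw0 : 0 < w := lt_trans hv hwv
    by_contra hle
    push_neg at hle
    have hne : Pf m c k θ w ≠ w := fun h => absurd (huniq' w hw0 h) (ne_of_gt hwv)
    have hgt : w < Pf m c k θ w := lt_of_le_of_ne hle (Ne.symm hne)
    set q := Real.exp (sg m c * (Real.pi/2) / om m c k) with hq
    have hq1 : q < 1 := by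
      rw [hq, Real.exp_lt_one_iff]
      have hω := om_pos hm hud'
      have hσ := sg_neg hm hc
      have hπ := Real.pi_pos
      apply div_neg_of_neg_of_pos ?_ hω
      exact mul_neg_of_neg_of_pos hσ (by linarith)
    have hq0 : 0 < q := Real.exp_pos _
    set C := q * (om m c k * θ - sg m c * θ) with hC
    set u := max (w+1) ((C+1)/(1-q)) with hu
    have huw : w < u := by
      have : w + 1 ≤ u := le_max_left _ _
      linarith
    have hu0 : 0 < u := lt_trans hw0 huw
    have hfu : Pf m c k θ u - u < 0 := by
      have hb := Pf_le hm hc hk hud' hθ hu0.le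
      have h2 : (C+1)/(1-q) ≤ u := le_max_right _ _
      have h3 : C + 1 ≤ (1-q) * u := by
        rw [div_le_iff₀ (by linarith : (0:ℝ) < 1-q)] at h2
        linarith [h2]
      have : Pf m c k θ u ≤ q * u + C := by
        calc Pf m c k θ u ≤ q * ((u - sg m c * θ) + om m c k * θ) := hb
          _ = q * u + C := by rw [hC]; ring
      nlinarith
    have hfw : 0 < Pf m c k θ w - w := by linarith
    have hsub : Set.Icc w u ⊆ Set.Ici (0:ℝ) := fun x hx => le_trans hw0.le hx.1
    have hiv := intermediate_value_Icc' huw.le (hcont.mono hsub)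
    obtain ⟨z, hz, hz0⟩ := hiv ⟨hfu.le, hfw.le⟩
    have hz1 : Pf m c k θ z = z := by linarith [sub_eq_zero.1 hz0]
    have hzpos : 0 < z := lt_of_lt_of_le hw0 hz.1
    have h1 := huniq' z hzpos hz1
    have h2 : vstar < z := lt_of_lt_of_le hwv hz.1
    exact absurd h1 (ne_of_gt h2)
  -- stability
  intro ε hε
  refine ⟨min ε vstar, lt_min hε hv, ?_⟩
  intro v hv0 hvδ n
  set δ := min ε vstar with hδ
  have hδε : δ ≤ ε := min_le_left _ _
  have hδv : δ ≤ vstar := min_le_right _ _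
  have step : ∀ x : ℝ, 0 < x → |x - vstar| < δ →
      0 < halfReturn m c k θ τ x ∧ |halfReturn m c k θ τ x - vstar| < δ := by
    intro x hx0 hxδ
    rw [hPeq x hx0.le]
    rw [abs_lt] at hxδ
    rcases lt_trichotomy x vstar with hlt | heq | hgt
    · have h1 : x < Pf m c k θ x := sign1 x hx0 hlt
      have h2 : Pf m c k θ x < vstar := by
        have := mono (Set.mem_Ici.2 hx0.le) (Set.mem_Ici.2 hv.le) hlt
        rw [hfix'] at this
        exact this
      constructor
      · linarith
      · rw [abs_lt]; constructor <;> linarith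
    · subst heq
      rw [hfix']
      refine ⟨hv, ?_⟩
      simp only [sub_self, abs_zero, hδ]
      exact lt_min hε hv
    · have h1 : Pf m c k θ x < x := sign2 x hgt
      have h2 : vstar < Pf m c k θ x := by
        have := mono (Set.mem_Ici.2 hv.le) (Set.mem_Ici.2 (lt_trans hv hgt).le) hgt
        rw [hfix'] at this
        exact this
      constructor
      · linarith
      · rw [abs_lt]; constructor <;> linarith
  have main : ∀ n : ℕ, 0 < (halfReturn m c k θ τ)^[n] v ∧
      |(halfReturn m c k θ τ)^[n] v - vstar| < δ := by
    intro n
    induction n with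
    | zero => exact ⟨hv0, hvδ⟩
    | succ n ih =>
      rw [Function.iterate_succ_apply']
      exact step _ ih.1 ih.2
  exact lt_of_lt_of_le (main n).2 hδε
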